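/- arXiv:2202.13192 — 2 statements merged into one kernel-verified Lean document; each statement's English description precedes it below -/
import Mathlib

section
/- Let (V,Q) and (V',Q') be anisotropic non-degenerate equivariant quadratic KG-modules such that (V,Q) ⊥ (V',−Q') is metabolic. Then there exists a G-equivariant isometry f : (V,Q) → (V',Q'). In particular, each Witt equivalence class of equivariant quadratic forms contains at most one anisotropic representative up to isometry. -/
open QuadraticMap

variable {K : Type*} [Field K] {G : Type*} [Group G]
variable {V W : Type*} [AddCommGroup V] [Module K V] [AddCommGroup W] [Module K W]

/-- `U` is a `KG`-submodule, i.e. invariant under the representation `ρ`. -/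
def IsSubrep (ρ : Representation K G V) (U : Submodule K V) : Prop :=
  ∀ g : G, ∀ v ∈ U, ρ g v ∈ U

/-- The quadratic form `Q` is `G`-invariant. -/
def GInvariantQF (ρ : Representation K G V) (Q : QuadraticForm K V) : Prop :=
  ∀ g v, Q (ρ g v) = Q v

/-- Orthogonal complement of a submodule with respect to the polarization of `Q`. -/
def qperp (Q : QuadraticForm K V) (U : Submodule K V) : Submodule K V :=
  LinearMap.BilinForm.orthogonal Q.polarBilin U

/-- `Q` is non-degenerate: the radical of its polarization is zero. -/
def QNondeg (Q : QuadraticForm K V) : Prop :=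
  LinearMap.BilinForm.Nondegenerate Q.polarBilin

/-- `(V, Q)` is metabolic: there is a `KG`-submodule `N` with `N = N^⊥` and `Q(N) = 0`. -/
def Metabolic (ρ : Representation K G V) (Q : QuadraticForm K V) : Prop :=
  ∃ N : Submodule K V, IsSubrep ρ N ∧ N = qperp Q N ∧ ∀ v ∈ N, Q v = 0

/-- `(V, Q)` is anisotropic: `Q` does not vanish on any non-zero `KG`-submodule. -/
def AnisotropicRep (ρ : Representation K G V) (Q : QuadraticForm K V) : Prop :=
  ∀ U : Submodule K V, IsSubrep ρ U → (∀ v ∈ U, Q v = 0) → U = ⊥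

/-- The product (orthogonal direct sum) of two representations. -/
def prodRep (ρ : Representation K G V) (σ : Representation K G W) :
    Representation K G (V × W) :=
  ⟨⟨fun g => (ρ g).prodMap (σ g), by ext v <;> simp⟩, fun g h => by ext v <;> simp⟩

/-- `V` is a simple `KG`-module. -/
def SimpleRep (ρ : Representation K G V) : Prop :=
  Nontrivial V ∧ ∀ U : Submodule K V, IsSubrep ρ U → U = ⊥ ∨ U = ⊤

/-- `V` is a self-dual `KG`-module. -/
def SelfDualRep (ρ : Representation K G V) : Prop :=
  ∃ f : V ≃ₗ[K] Module.Dual K V, ∀ g v, f (ρ g v) = ρ.dual g (f v)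

/-!
The metabolizer `N ≤ V × W` is a `KG`-submodule on which `Q ⊕ -Q'` vanishes, so its
intersections with `V × 0` and `0 × W` are `KG`-submodules on which `Q`, resp. `Q'`, vanishes;
by anisotropy both are zero. Since `N = N^⊥`, a vector `v` orthogonal to the projection of `N`
to `V` gives `(v, 0) ∈ N`, hence `v = 0`; by non-degeneracy both projections are therefore
onto. So `N` is the graph of a linear isomorphism `f : V ≃ W`, which is equivariant because
`N` is `G`-stable and an isometry because `Q v - Q' (f v) = 0` on `N`.
-/

open LinearMap

lemma QNondeg.neg {Q : QuadraticForm K V} (hnd : QNondeg Q) : QNondeg (-Q) :=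
  ⟨fun v hv => hnd.1 v fun w => by simpa [polar_neg] using hv w,
    fun w hw => hnd.2 w fun v => by simpa [polar_neg] using hw v⟩

lemma AnisotropicRep.neg {ρ : Representation K G V} {Q : QuadraticForm K V}
    (han : AnisotropicRep ρ Q) : AnisotropicRep ρ (-Q) :=
  fun U hU hQ => han U hU fun v hv => neg_eq_zero.mp (hQ v hv)

lemma QuadraticMap.polarBilin_isRefl (Q : QuadraticForm K V) : Q.polarBilin.IsRefl :=
  fun x y h => by rwa [polarBilin_apply_apply, polar_comm, ← polarBilin_apply_apply]

@[simp]
lemma prodRep_apply (ρ : Representation K G V) (σ : Representation K G W) (g : G) (p : V × W) :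
    prodRep ρ σ g p = (ρ g p.1, σ g p.2) :=
  rfl

section Graph

variable {N : Submodule K (V × W)}

lemma bijective_fst_comp_subtype (hr : N.comap (inr K V W) = ⊥)
    (hfst : N.map (fst K V W) = ⊤) : Function.Bijective (fst K V W ∘ₗ N.subtype) := by
  refine ⟨ker_eq_bot.mp (eq_bot_iff.mpr fun x hx => ?_), range_eq_top.mp ?_⟩
  · have hx2 : x.1.2 ∈ N.comap (inr K V W) := by
      rw [Submodule.mem_comap, show inr K V W x.1.2 = x.1 from Prod.ext hx.symm rfl]
      exact x.2
    rw [hr] at hx2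
    exact (Submodule.mk_eq_zero _ _).mpr (Prod.ext hx hx2)
  · rwa [range_comp, Submodule.range_subtype]

lemma bijective_snd_comp_subtype (hl : N.comap (inl K V W) = ⊥)
    (hsnd : N.map (snd K V W) = ⊤) : Function.Bijective (snd K V W ∘ₗ N.subtype) := by
  refine ⟨ker_eq_bot.mp (eq_bot_iff.mpr fun x hx => ?_), range_eq_top.mp ?_⟩
  · have hx1 : x.1.1 ∈ N.comap (inl K V W) := by
      rw [Submodule.mem_comap, show inl K V W x.1.1 = x.1 from Prod.ext rfl hx.symm]
      exact x.2
    rw [hl] at hx1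
    exact (Submodule.mk_eq_zero _ _).mpr (Prod.ext hx1 hx)
  · rwa [range_comp, Submodule.range_subtype]

lemma Submodule.exists_linearEquiv_mem_iff (hl : N.comap (inl K V W) = ⊥)
    (hr : N.comap (inr K V W) = ⊥) (hfst : N.map (LinearMap.fst K V W) = ⊤)
    (hsnd : N.map (LinearMap.snd K V W) = ⊤) :
    ∃ f : V ≃ₗ[K] W, ∀ v w, (v, w) ∈ N ↔ f v = w := by
  let e₁ := LinearEquiv.ofBijective _ (bijective_fst_comp_subtype hr hfst)
  let e₂ := LinearEquiv.ofBijective _ (bijective_snd_comp_subtype hl hsnd)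
  have hgraph (x : N) : (e₁.symm.trans e₂) (e₁ x) = x.1.2 :=
    congrArg e₂ (e₁.symm_apply_apply x)
  refine ⟨e₁.symm.trans e₂, fun v w => ⟨fun h => hgraph ⟨(v, w), h⟩, ?_⟩⟩
  rintro rfl
  obtain ⟨x, rfl⟩ := e₁.surjective v
  rw [hgraph]
  exact x.2

end Graph

section Metabolizer

variable {ρ : Representation K G V} {σ : Representation K G W}
  {Q₁ : QuadraticForm K V} {Q₂ : QuadraticForm K W} {N : Submodule K (V × W)}

lemma comap_inl_eq_bot_of_anisotropicRep (han : AnisotropicRep ρ Q₁)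
    (hN : IsSubrep (prodRep ρ σ) N)
    (hiso : ∀ p ∈ N, Q₁.prod Q₂ p = 0) : N.comap (inl K V W) = ⊥ :=
  han _ (fun g v hv => by simpa using hN g _ hv) fun v hv => by simpa using hiso _ hv

lemma comap_inr_eq_bot_of_anisotropicRep (han : AnisotropicRep σ Q₂)
    (hN : IsSubrep (prodRep ρ σ) N)
    (hiso : ∀ p ∈ N, Q₁.prod Q₂ p = 0) : N.comap (inr K V W) = ⊥ :=
  han _ (fun g w hw => by simpa using hN g _ hw) fun w hw => by simpa using hiso _ hw

lemma map_fst_eq_top_of_qperp_le [FiniteDimensional K V] (hnd : QNondeg Q₁)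
    (hl : N.comap (inl K V W) = ⊥) (hperp : qperp (Q₁.prod Q₂) N ≤ N) :
    N.map (fst K V W) = ⊤ := by
  have horth : BilinForm.orthogonal Q₁.polarBilin (N.map (fst K V W)) = ⊥ := by
    refine eq_bot_iff.mpr fun v hv => ?_
    have hvN : v ∈ N.comap (inl K V W) :=
      hperp fun p hp => by simpa using hv p.1 ⟨p, hp, rfl⟩
    rwa [hl] at hvN
  rw [← BilinForm.orthogonal_orthogonal hnd Q₁.polarBilin_isRefl (N.map (fst K V W)), horth,
    BilinForm.orthogonal_bot]

lemma map_snd_eq_top_of_qperp_le [FiniteDimensional K W] (hnd : QNondeg Q₂)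
    (hr : N.comap (inr K V W) = ⊥) (hperp : qperp (Q₁.prod Q₂) N ≤ N) :
    N.map (snd K V W) = ⊤ := by
  have horth : BilinForm.orthogonal Q₂.polarBilin (N.map (snd K V W)) = ⊥ := by
    refine eq_bot_iff.mpr fun w hw => ?_
    have hwN : w ∈ N.comap (inr K V W) :=
      hperp fun p hp => by simpa using hw p.2 ⟨p, hp, rfl⟩
    rwa [hr] at hwN
  rw [← BilinForm.orthogonal_orthogonal hnd Q₂.polarBilin_isRefl (N.map (snd K V W)), horth,
    BilinForm.orthogonal_bot]

end Metabolizer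

theorem stmt4_general [FiniteDimensional K V] [FiniteDimensional K W]
    (ρ : Representation K G V) (Q : QuadraticForm K V)
    (σ : Representation K G W) (Q' : QuadraticForm K W)
    (hnd : QNondeg Q) (han : AnisotropicRep ρ Q)
    (hnd' : QNondeg Q') (han' : AnisotropicRep σ Q')
    (hmet : Metabolic (prodRep ρ σ) (Q.prod (-Q'))) :
    ∃ f : V ≃ₗ[K] W, (∀ g v, f (ρ g v) = σ g (f v)) ∧ ∀ v, Q' (f v) = Q v := by
  obtain ⟨N, hNrep, hNperp, hNiso⟩ := hmet
  have hl := comap_inl_eq_bot_of_anisotropicRep han hNrep hNiso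
  have hr := comap_inr_eq_bot_of_anisotropicRep han'.neg hNrep hNiso
  obtain ⟨f, hf⟩ := N.exists_linearEquiv_mem_iff hl hr
    (map_fst_eq_top_of_qperp_le hnd hl hNperp.ge)
    (map_snd_eq_top_of_qperp_le hnd'.neg hr hNperp.ge)
  refine ⟨f, fun g v => (hf _ _).mp ?_, fun v => ?_⟩
  · simpa using hNrep g _ ((hf v _).mpr rfl)
  · have hQ : Q v + -Q' (f v) = 0 := by simpa using hNiso _ ((hf v _).mpr rfl)
    linear_combination -hQ

/-- two anisotropic equivariant quadratic modules whose difference is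
metabolic are `G`-equivariantly isometric; in particular each Witt class contains at most
one anisotropic representative up to isometry. -/
theorem stmt4 [Finite G] [FiniteDimensional K V] [FiniteDimensional K W]
    (ρ : Representation K G V) (Q : QuadraticForm K V)
    (σ : Representation K G W) (Q' : QuadraticForm K W)
    (hinv : GInvariantQF ρ Q) (hnd : QNondeg Q) (han : AnisotropicRep ρ Q)
    (hinv' : GInvariantQF σ Q') (hnd' : QNondeg Q') (han' : AnisotropicRep σ Q')
    (hmet : Metabolic (prodRep ρ σ) (Q.prod (-Q'))) :
    ∃ f : V ≃ₗ[K] W, (∀ g v, f (ρ g v) = σ g (f v)) ∧ ∀ v, Q' (f v) = Q v :=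
  stmt4_general ρ Q σ Q' hnd han hnd' han' hmet
end

section
/- Let K be a finite field of characteristic 2, G a finite group, and V a simple KG-module carrying a non-zero G-invariant quadratic form Q. Then either V is the trivial module and the polarization B_Q is zero, or Q is non-degenerate. In both cases Q is the unique non-zero G-invariant quadratic form on V up to KG-isometry. -/
/-! The radical of the polarization `B_Q` is a `KG`-submodule, so `B_Q = 0` or `Q` is
non-degenerate. Over a perfect field of characteristic 2, a form with `B_Q = 0` is additive and
hence the square of a linear functional; that functional is `G`-invariant, so by simplicity it
is an isomorphism `V ≃ K` onto the trivial module, and on a line every polarization vanishes.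

For two non-degenerate invariant forms write `B_Q = B_{Q'}(φ ·, ·)`. Then `φ` is equivariant and
`B_{Q'}`-self-adjoint, and by Schur's lemma `K[φ]` is a finite domain of characteristic 2, where
squaring is onto: `φ = t²` with `t ∈ K[φ]`, so `B_{Q'}(t ·, t ·) = B_Q`. Now `Q' ∘ t - Q` is an
invariant form with zero polarization; were it non-zero, `V` would be a line, on which `Q` is
degenerate. So `t` is the required isometry. -/

open QuadraticMap

variable {K : Type*} [Field K] {G : Type*} [Group G]
variable {V W : Type*} [AddCommGroup V] [Module K V] [AddCommGroup W] [Module K W]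

open LinearMap.BilinForm

section CharTwo

variable [CharP K 2]

theorem QuadraticForm.exists_linearMap_sq_eq_of_polarBilin_eq_zero [PerfectRing K 2]
    (Q : QuadraticForm K V) (hQ : Q.polarBilin = 0) :
    ∃ f : V →ₗ[K] K, ∀ v, Q v = f v ^ 2 := by
  let r := (frobeniusEquiv K 2).symm
  have hadd (v w : V) : Q (v + w) = Q v + Q w := by
    have := congr($hQ v w)
    simp only [polarBilin_apply_apply, polar, LinearMap.zero_apply] at this
    linear_combination this
  refine ⟨{ toFun := fun v => r (Q v), map_add' := ?_, map_smul' := ?_ }, fun v => ?_⟩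
  · intro v w
    simp only [hadd, map_add]
  · intro c v
    simp only [QuadraticMap.map_smul, smul_eq_mul, RingHom.id_apply, ← pow_two, map_mul, r,
      frobeniusEquiv_symm_pow]
  · exact (frobeniusEquiv_symm_pow_p K 2 (Q v)).symm

theorem QuadraticForm.polarBilin_eq_zero_of_equiv (F : V ≃ₗ[K] K) (Q : QuadraticForm K V) :
    Q.polarBilin = 0 := by
  set e := F.symm 1
  have hline (v : V) : v = F v • e := F.injective (by simp [e])
  ext v w
  rw [hline v, hline w]
  simp [polar_self, CharTwo.two_eq_zero]

theorem QNondeg.isEmpty_equiv {Q : QuadraticForm K V} (hQ : QNondeg Q) :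
    IsEmpty (V ≃ₗ[K] K) := by
  refine ⟨fun F => ?_⟩
  have hv : F.symm 1 ≠ 0 := by simp
  exact hv (hQ.1 _ fun w => by simp [QuadraticForm.polarBilin_eq_zero_of_equiv F Q])

end CharTwo

section Representation

variable {ρ : Representation K G V}

theorem SimpleRep.injective_of_isIntertwiningMap (hs : SimpleRep ρ) {σ : Representation K G W}
    {f : V →ₗ[K] W} (hf : ρ.IsIntertwiningMap σ f) (h0 : f ≠ 0) : Function.Injective f := by
  have hker : IsSubrep ρ (LinearMap.ker f) := fun g v hv => by
    rw [LinearMap.mem_ker] at hv ⊢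
    rw [hf.isIntertwining, hv, map_zero]
  rcases hs.2 _ hker with h | h
  · exact LinearMap.ker_eq_bot.mp h
  · exact absurd (LinearMap.ker_eq_top.mp h) h0

theorem Representation.IsIntertwiningMap.of_mem_adjoin_singleton {φ a : Module.End K V}
    (hφ : ρ.IsIntertwiningMap ρ φ) (ha : a ∈ Algebra.adjoin K {φ}) :
    ρ.IsIntertwiningMap ρ a := by
  refine ⟨fun g v => ?_⟩
  have hcomm : Commute (ρ g) a := Algebra.commute_of_mem_adjoin_of_forall_mem_commute ha <| by
    rintro _ rfl
    exact LinearMap.ext fun v => (hφ.isIntertwining g v).symm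
  exact congr($hcomm v).symm

theorem LinearMap.IsAdjointPair.of_mem_adjoin_singleton {B : LinearMap.BilinForm K V}
    {φ a : Module.End K V} (hφ : B.IsAdjointPair B φ φ) (ha : a ∈ Algebra.adjoin K {φ}) :
    B.IsAdjointPair B a a := by
  induction ha using Algebra.adjoin_induction with
  | mem x hx => rwa [Set.mem_singleton_iff.mp hx]
  | algebraMap r => simpa [Algebra.algebraMap_eq_smul_one] using isAdjointPair_one.smul r
  | add x y _ _ hx hy => exact hx.add hy
  | mul x y hxA hyA hx hy => simpa [setLike_mul_comm hyA hxA] using hx.mul hy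

theorem GInvariantQF.polar_apply {Q : QuadraticForm K V} (hQ : GInvariantQF ρ Q)
    (g : G) (v w : V) : polar Q (ρ g v) (ρ g w) = polar Q v w := by
  rw [polar, polar, ← map_add, hQ, hQ, hQ]

theorem GInvariantQF.polarBilin_apply_left {Q : QuadraticForm K V} (hQ : GInvariantQF ρ Q)
    (g : G) (v w : V) : Q.polarBilin (ρ g v) w = Q.polarBilin v (ρ g⁻¹ w) := by
  rw [polarBilin_apply_apply, polarBilin_apply_apply, ← hQ.polar_apply g v, ρ.self_inv_apply]

theorem SimpleRep.polarBilin_eq_zero_or_qnondeg (hs : SimpleRep ρ) {Q : QuadraticForm K V}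
    (hQ : GInvariantQF ρ Q) : Q.polarBilin = 0 ∨ QNondeg Q := by
  have hker : IsSubrep ρ (LinearMap.ker Q.polarBilin) := fun g v hv => by
    rw [LinearMap.mem_ker] at hv ⊢
    ext w
    rw [hQ.polarBilin_apply_left, hv, LinearMap.zero_apply, LinearMap.zero_apply]
  have hrefl : Q.polarBilin.IsRefl := fun v w h => by
    rwa [polarBilin_apply_apply, polar_comm, ← polarBilin_apply_apply]
  rcases hs.2 _ hker with h | h
  · exact Or.inr ((hrefl.nondegenerate_iff_separatingLeft).mpr
      (LinearMap.separatingLeft_iff_ker_eq_bot.mpr h))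
  · exact Or.inl (LinearMap.ker_eq_top.mp h)

theorem exists_isometry_of_sq_eq {Q Q' : QuadraticForm K V} {F F' : V ≃ₗ[K] K}
    (hF : ∀ g v, F (ρ g v) = F v) (hF' : ∀ g v, F' (ρ g v) = F' v)
    (hQ : ∀ v, Q v = F v ^ 2) (hQ' : ∀ v, Q' v = F' v ^ 2) :
    ∃ e : V ≃ₗ[K] V, (∀ g v, e (ρ g v) = ρ g (e v)) ∧ ∀ v, Q' (e v) = Q v :=
  ⟨F.trans F'.symm, fun g v => F'.injective (by simp [hF, hF']), fun v => by simp [hQ, hQ']⟩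

variable [CharP K 2]

theorem SimpleRep.exists_equiv_sq_eq_of_polarBilin_eq_zero [PerfectRing K 2] (hs : SimpleRep ρ)
    {Q : QuadraticForm K V} (hQ0 : Q ≠ 0) (hQ : GInvariantQF ρ Q) (hz : Q.polarBilin = 0) :
    ∃ F : V ≃ₗ[K] K, (∀ g v, F (ρ g v) = F v) ∧ ∀ v, Q v = F v ^ 2 := by
  obtain ⟨f, hf⟩ := Q.exists_linearMap_sq_eq_of_polarBilin_eq_zero hz
  have hinv (g : G) (v : V) : f (ρ g v) = f v :=
    frobenius_inj K 2 (by rw [frobenius_def, frobenius_def, ← hf, ← hf, hQ])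
  have h0 : f ≠ 0 := by
    rintro rfl
    exact hQ0 (QuadraticMap.ext fun v => by simp [hf])
  have hinj := hs.injective_of_isIntertwiningMap (σ := Representation.trivial K G K) ⟨hinv⟩ h0
  exact ⟨.ofBijective f ⟨hinj, LinearMap.surjective_of_ne_zero h0⟩, hinv, hf⟩

open scoped IsMulCommutative in
theorem SimpleRep.exists_mul_self_eq [Finite K] [FiniteDimensional K V] (hs : SimpleRep ρ)
    {φ : Module.End K V} (hφ : ρ.IsIntertwiningMap ρ φ) :
    ∃ t ∈ Algebra.adjoin K {φ}, t * t = φ := by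
  have := hs.1
  set A := Algebra.adjoin K {φ}
  have : Finite (Module.End K V) := Module.finite_of_finite K
  have : NoZeroDivisors A := ⟨fun {a b} hab => or_iff_not_imp_left.mpr fun ha => by
    have ha' : (a : Module.End K V) ≠ 0 := fun h => ha (Subtype.ext h)
    have hinj := hs.injective_of_isIntertwiningMap (hφ.of_mem_adjoin_singleton a.2) ha'
    refine Subtype.ext (LinearMap.ext fun v => hinj ?_)
    simpa using congr($(congr_arg Subtype.val hab) v)⟩
  have : CharP A 2 := charP_of_injective_algebraMap (algebraMap K A).injective 2
  obtain ⟨t, ht⟩ := surjective_frobenius A 2 ⟨φ, Algebra.self_mem_adjoin_singleton K φ⟩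
  exact ⟨t, t.2, by simpa [frobenius_def, pow_two] using congr_arg Subtype.val ht⟩

theorem SimpleRep.exists_isometry_of_qnondeg [Finite K] [FiniteDimensional K V] (hs : SimpleRep ρ)
    {Q Q' : QuadraticForm K V} (hQ : GInvariantQF ρ Q) (hQ' : GInvariantQF ρ Q')
    (hnd : QNondeg Q) (hnd' : QNondeg Q') :
    ∃ e : V ≃ₗ[K] V, (∀ g v, e (ρ g v) = ρ g (e v)) ∧ ∀ v, Q' (e v) = Q v := by
  set B := Q.polarBilin
  set B' := Q'.polarBilin
  set φ := symmCompOfNondegenerate B B' hnd'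
  have hB'φ (v w : V) : B' (φ v) w = B v w := symmCompOfNondegenerate_left_apply _ _ _ _
  have hφ : ρ.IsIntertwiningMap ρ φ := ⟨fun g v => sub_eq_zero.mp <| hnd'.1 _ fun w => by
    rw [map_sub, LinearMap.sub_apply, hB'φ, hQ.polarBilin_apply_left, hQ'.polarBilin_apply_left,
      hB'φ, sub_self]⟩
  have hφ_adj : B'.IsAdjointPair B' φ φ := fun v w => by
    rw [hB'φ, polarBilin_apply_apply, polar_comm, ← polarBilin_apply_apply, ← hB'φ,
      polarBilin_apply_apply, polar_comm, ← polarBilin_apply_apply]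
  obtain ⟨t, htA, htt⟩ := hs.exists_mul_self_eq hφ
  have ht_isometry (v w : V) : B' (t v) (t w) = B v w := by
    rw [hφ_adj.of_mem_adjoin_singleton htA, ← Module.End.mul_apply, htt, polarBilin_apply_apply,
      polar_comm, ← polarBilin_apply_apply, hB'φ, polarBilin_apply_apply, polar_comm,
      ← polarBilin_apply_apply]
  have ht_inj : Function.Injective t := fun x y hxy => sub_eq_zero.mp <| hnd.1 _ fun w => by
    rw [← ht_isometry, map_sub, hxy, sub_self, LinearMap.map_zero₂]
  set D : QuadraticForm K V := Q'.comp t - Q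
  have hD : D.polarBilin = 0 := by
    ext v w
    have := ht_isometry v w
    simp only [B, B', polarBilin_apply_apply, polar] at this
    simp only [D, polarBilin_apply_apply, polar, _root_.sub_apply, QuadraticMap.comp_apply,
      map_add, LinearMap.zero_apply]
    linear_combination this
  have hDinv : GInvariantQF ρ D := fun g v => by
    simp [D, (hφ.of_mem_adjoin_singleton htA).isIntertwining, hQ g v, hQ' g (t v)]
  have hD0 : D = 0 := by
    by_contra hD0
    obtain ⟨F, -⟩ := hs.exists_equiv_sq_eq_of_polarBilin_eq_zero hD0 hDinv hD
    exact hnd.isEmpty_equiv.false F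
  refine ⟨.ofInjectiveEndo t ht_inj, (hφ.of_mem_adjoin_singleton htA).isIntertwining,
    fun v => ?_⟩
  simpa [D, sub_eq_zero] using congr($hD0 v)

end Representation

theorem stmt10_general [Fintype K] (h2 : ringChar K = 2) [FiniteDimensional K V]
    (ρ : Representation K G V) (hsimple : SimpleRep ρ)
    (Q : QuadraticForm K V) (hQ : Q ≠ 0) (hinv : GInvariantQF ρ Q) :
    (((∃ f : V ≃ₗ[K] K, ∀ g v, f (ρ g v) = f v) ∧ Q.polarBilin = 0) ∨ QNondeg Q) ∧
    ∀ Q' : QuadraticForm K V, Q' ≠ 0 → GInvariantQF ρ Q' →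
      ∃ e : V ≃ₗ[K] V, (∀ g v, e (ρ g v) = ρ g (e v)) ∧ ∀ v, Q' (e v) = Q v := by
  have : CharP K 2 := ringChar.eq_iff.mp h2
  rcases hsimple.polarBilin_eq_zero_or_qnondeg hinv with hz | hnd
  · obtain ⟨F, hF, hQF⟩ := hsimple.exists_equiv_sq_eq_of_polarBilin_eq_zero hQ hinv hz
    refine ⟨.inl ⟨⟨F, hF⟩, hz⟩, fun Q' hQ' hinv' => ?_⟩
    obtain ⟨F', hF', hQF'⟩ := hsimple.exists_equiv_sq_eq_of_polarBilin_eq_zero hQ' hinv'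
      (Q'.polarBilin_eq_zero_of_equiv F)
    exact exists_isometry_of_sq_eq hF hF' hQF hQF'
  · refine ⟨.inr hnd, fun Q' hQ' hinv' => ?_⟩
    rcases hsimple.polarBilin_eq_zero_or_qnondeg hinv' with hz' | hnd'
    · obtain ⟨F', -⟩ := hsimple.exists_equiv_sq_eq_of_polarBilin_eq_zero hQ' hinv' hz'
      exact (hnd.isEmpty_equiv.false F').elim
    · exact hsimple.exists_isometry_of_qnondeg hinv hinv' hnd hnd'

/-- a non-zero `G`-invariant quadratic form `Q` on a simple `KG`-module is
either defined on the trivial module with zero polarization, or non-degenerate; and in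
both cases it is the unique non-zero `G`-invariant quadratic form up to `KG`-isometry. -/
theorem stmt10 [Fintype K] (h2 : ringChar K = 2) [Finite G] [FiniteDimensional K V]
    (ρ : Representation K G V) (hsimple : SimpleRep ρ)
    (Q : QuadraticForm K V) (hQ : Q ≠ 0) (hinv : GInvariantQF ρ Q) :
    (((∃ f : V ≃ₗ[K] K, ∀ g v, f (ρ g v) = f v) ∧ Q.polarBilin = 0) ∨ QNondeg Q) ∧
    ∀ Q' : QuadraticForm K V, Q' ≠ 0 → GInvariantQF ρ Q' →
      ∃ e : V ≃ₗ[K] V, (∀ g v, e (ρ g v) = ρ g (e v)) ∧ ∀ v, Q' (e v) = Q v :=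
  stmt10_general h2 ρ hsimple Q hQ hinv
end
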